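/- arXiv:1709.07987 — 2 statements merged into one kernel-verified Lean document; each statement's English description precedes it below -/
import Mathlib

section
/- (Dual Bell–CHSH inequality.) Let d_A, d_B ≥ 2 and let M₁ be an effect on ℂ^{d_A} ⊗ ℂ^{d_B} that is separable positive, i.e., M₁ = Σᵢ Aᵢ ⊗ Bᵢ (finite sum, Kronecker product) with each Aᵢ and Bᵢ positive semidefinite, and suppose tr M₁ ≤ 1. Set M = 2M₁ − 𝟙. Then for all quantum states ρ₀^A, ρ₁^A on ℂ^{d_A} and ρ₀^B, ρ₁^B on ℂ^{d_B}, the quantity D = E(ρ₀^A, ρ₀^B, M) + E(ρ₀^A, ρ₁^B, M) + E(ρ₁^A, ρ₀^B, M) − E(ρ₁^A, ρ₁^B, M) satisfies −2 ≤ D ≤ 2. -/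
open Matrix Kronecker ComplexOrder

/-- A quantum state: positive semidefinite matrix of trace one. -/
def IsState {d : ℕ} (ρ : Matrix (Fin d) (Fin d) ℂ) : Prop :=
  ρ.PosSemidef ∧ ρ.trace = 1

/-- Separable positivity: a finite sum of Kronecker products of
positive semidefinite matrices. -/
def SepPos {dA dB : ℕ} (S : Matrix (Fin dA × Fin dB) (Fin dA × Fin dB) ℂ) : Prop :=
  ∃ (n : ℕ) (A : Fin n → Matrix (Fin dA) (Fin dA) ℂ)
    (B : Fin n → Matrix (Fin dB) (Fin dB) ℂ),
    (∀ i, (A i).PosSemidef) ∧ (∀ i, (B i).PosSemidef) ∧ S = ∑ i, (A i) ⊗ₖ (B i)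

/-- The difference from ignorance
`E(ρᴬ, ρᴮ, M) = (α_{d_A} α_{d_B} / 2) · Re tr(((ρᴬ - 𝟙/d_A) ⊗ (ρᴮ - 𝟙/d_B)) M)`. -/
noncomputable def Ediff (dA dB : ℕ)
    (ρA : Matrix (Fin dA) (Fin dA) ℂ) (ρB : Matrix (Fin dB) (Fin dB) ℂ)
    (M : Matrix (Fin dA × Fin dB) (Fin dA × Fin dB) ℂ) : ℝ :=
  ((dA : ℝ) / ((dA : ℝ) - 1)) * ((dB : ℝ) / ((dB : ℝ) - 1)) / 2 *
    ((((ρA - (dA : ℂ)⁻¹ • 1) ⊗ₖ (ρB - (dB : ℂ)⁻¹ • 1)) * M).trace).re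

/-! Write `M₁ = ∑ᵢ Aᵢ ⊗ Bᵢ`. Because `ρ - 𝟙/d_A` is traceless, the term `-𝟙` of `M` drops out
and `E(ρ, σ, M) = ∑ᵢ aᵢ(ρ) bᵢ(σ)` with `aᵢ(ρ) = α_{d_A} Re tr((ρ - 𝟙/d_A) Aᵢ)` and `bᵢ` alike.
For a state `ρ` we have `0 ≤ tr(ρ Aᵢ) ≤ tr Aᵢ`, hence `|aᵢ(ρ)| ≤ tr Aᵢ` as soon as `d_A ≥ 2`,
and likewise `|bᵢ(σ)| ≤ tr Bᵢ`. The classical CHSH bound then controls the `i`-th summand of `D`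
by `2 tr Aᵢ tr Bᵢ`, and these add up to `2 tr M₁ ≤ 2`. -/

namespace Matrix

lemma IsHermitian.sub_inv_natCast_smul_one {n : Type*} [DecidableEq n] (d : ℕ) {ρ : Matrix n n ℂ}
    (hρ : ρ.IsHermitian) : (ρ - (d : ℂ)⁻¹ • 1).IsHermitian :=
  hρ.sub (isHermitian_one.smul (by simp [IsSelfAdjoint]))

variable {m n ι : Type*} [Fintype m] [Fintype n] [Fintype ι]

lemma PosSemidef.trace_mul_nonneg {P Q : Matrix n n ℂ} (hP : P.PosSemidef)
    (hQ : Q.PosSemidef) : 0 ≤ (P * Q).trace := by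
  classical
  open scoped MatrixOrder in
  obtain ⟨B, rfl⟩ := CStarAlgebra.nonneg_iff_eq_star_mul_self.mp hP.nonneg
  rw [← trace_mul_cycle]
  exact (hQ.mul_mul_conjTranspose_same B).trace_nonneg

lemma PosSemidef.one_sub_of_trace_eq_one [DecidableEq n] {ρ : Matrix n n ℂ}
    (hρ : ρ.PosSemidef) (htr : ρ.trace = 1) : (1 - ρ).PosSemidef := by
  open scoped MatrixOrder in
  suffices ρ ≤ algebraMap ℝ _ 1 by simpa [le_iff] using this
  refine le_algebraMap_of_spectrum_le ?_ hρ.1.isSelfAdjoint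
  rw [hρ.1.spectrum_real_eq_range_eigenvalues]
  rintro _ ⟨i, rfl⟩
  have hsum : ∑ j, hρ.1.eigenvalues j = 1 := by
    simpa [htr] using (congrArg Complex.re hρ.1.trace_eq_sum_eigenvalues).symm
  exact hsum ▸ Finset.single_le_sum (fun j _ => hρ.eigenvalues_nonneg j) (Finset.mem_univ i)

lemma IsHermitian.im_trace_mul_eq_zero {X A : Matrix n n ℂ} (hX : X.IsHermitian)
    (hA : A.IsHermitian) : (X * A).trace.im = 0 := by
  rw [← Complex.conj_eq_iff_im, ← Complex.star_def, ← trace_conjTranspose, conjTranspose_mul,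
    hX.eq, hA.eq, trace_mul_comm]

lemma IsHermitian.im_trace_eq_zero [DecidableEq n] {A : Matrix n n ℂ} (hA : A.IsHermitian) :
    A.trace.im = 0 := by
  simpa using isHermitian_one.im_trace_mul_eq_zero hA

lemma trace_sub_inv_natCast_smul_one {d : ℕ} (hd : d ≠ 0) {ρ : Matrix (Fin d) (Fin d) ℂ}
    (htr : ρ.trace = 1) : (ρ - (d : ℂ)⁻¹ • 1).trace = 0 := by
  simp [trace_sub, trace_smul, htr, hd]

lemma trace_kronecker_mul_two_smul_sum_sub_one {R : Type*} [CommRing R] [DecidableEq m]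
    [DecidableEq n] {X : Matrix m m R} (hX : X.trace = 0) (Y : Matrix n n R)
    (A : ι → Matrix m m R) (B : ι → Matrix n n R) :
    ((X ⊗ₖ Y) * ((2 : R) • ∑ i, A i ⊗ₖ B i - 1)).trace
      = 2 * ∑ i, (X * A i).trace * (Y * B i).trace := by
  simp only [mul_sub, mul_one, mul_smul_comm, Finset.mul_sum, ← mul_kronecker_mul, trace_sub,
    trace_smul, trace_sum, trace_kronecker, hX, zero_mul, sub_zero, smul_eq_mul]

lemma re_trace_sum_kronecker [DecidableEq m] {A : ι → Matrix m m ℂ} (B : ι → Matrix n n ℂ)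
    (hA : ∀ i, (A i).IsHermitian) :
    (∑ i, A i ⊗ₖ B i).trace.re = ∑ i, (A i).trace.re * (B i).trace.re := by
  simp [trace_sum, trace_kronecker, Complex.mul_re, (hA _).im_trace_eq_zero]

end Matrix

lemma abs_chsh_le {a₀ a₁ b₀ b₁ α β : ℝ} (ha₀ : |a₀| ≤ α) (ha₁ : |a₁| ≤ α) (hb₀ : |b₀| ≤ β)
    (hb₁ : |b₁| ≤ β) : |a₀ * b₀ + a₀ * b₁ + a₁ * b₀ - a₁ * b₁| ≤ 2 * (α * β) := by
  have hb : |b₀ + b₁| + |b₀ - b₁| ≤ 2 * β := by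
    rcases abs_le.mp hb₀ with ⟨_, _⟩
    rcases abs_le.mp hb₁ with ⟨_, _⟩
    rcases abs_cases (b₀ + b₁) with ⟨_, _⟩ | ⟨_, _⟩ <;>
      rcases abs_cases (b₀ - b₁) with ⟨_, _⟩ | ⟨_, _⟩ <;> linarith
  calc |a₀ * b₀ + a₀ * b₁ + a₁ * b₀ - a₁ * b₁| = |a₀ * (b₀ + b₁) + a₁ * (b₀ - b₁)| := by ring_nf
    _ ≤ |a₀| * |b₀ + b₁| + |a₁| * |b₀ - b₁| := by
      simpa only [abs_mul] using abs_add_le (a₀ * (b₀ + b₁)) (a₁ * (b₀ - b₁))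
    _ ≤ α * (|b₀ + b₁| + |b₀ - b₁|) := by
      rw [mul_add]
      gcongr
    _ ≤ 2 * (α * β) := by nlinarith [(abs_nonneg a₀).trans ha₀]

lemma abs_div_sub_one_mul_sub_inv_mul_le {d u t : ℝ} (hd : 2 ≤ d) (hu : 0 ≤ u) (hut : u ≤ t) :
    |d / (d - 1) * (u - d⁻¹ * t)| ≤ t := by
  have hd₁ : 0 < d - 1 := by linarith
  rw [show d / (d - 1) * (u - d⁻¹ * t) = (d * u - t) / (d - 1) by field_simp, abs_le,
    le_div_iff₀ hd₁, div_le_iff₀ hd₁]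
  constructor <;> nlinarith

noncomputable def localEdiff {n : Type*} [Fintype n] [DecidableEq n] (d : ℕ)
    (ρ A : Matrix n n ℂ) : ℝ :=
  (d : ℝ) / ((d : ℝ) - 1) * (((ρ - (d : ℂ)⁻¹ • 1) * A).trace).re

lemma abs_localEdiff_le {n : Type*} [Fintype n] [DecidableEq n] {d : ℕ} (hd : 2 ≤ d)
    {ρ A : Matrix n n ℂ} (hρ : ρ.PosSemidef) (htr : ρ.trace = 1) (hA : A.PosSemidef) :
    |localEdiff d ρ A| ≤ A.trace.re := by
  have hre : (((ρ - (d : ℂ)⁻¹ • 1) * A).trace).re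
      = (ρ * A).trace.re - (d : ℝ)⁻¹ * A.trace.re := by
    simp [sub_mul, trace_sub, trace_smul]
  have hlow := Complex.le_def.mp (hρ.trace_mul_nonneg hA)
  have hup := Complex.le_def.mp ((hρ.one_sub_of_trace_eq_one htr).trace_mul_nonneg hA)
  simp only [sub_mul, one_mul, trace_sub, Complex.zero_re, Complex.sub_re] at hlow hup
  rw [localEdiff, hre]
  exact abs_div_sub_one_mul_sub_inv_mul_le (by exact_mod_cast hd) hlow.1 (by linarith [hup.1])

lemma Ediff_two_smul_sum_kronecker_sub_one {dA dB : ℕ} (hdA : dA ≠ 0) {ι : Type*} [Fintype ι]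
    {ρ : Matrix (Fin dA) (Fin dA) ℂ} (σ : Matrix (Fin dB) (Fin dB) ℂ) (hρ : ρ.IsHermitian)
    (hρtr : ρ.trace = 1) {A : ι → Matrix (Fin dA) (Fin dA) ℂ}
    (B : ι → Matrix (Fin dB) (Fin dB) ℂ) (hA : ∀ i, (A i).IsHermitian) :
    Ediff dA dB ρ σ ((2 : ℂ) • ∑ i, A i ⊗ₖ B i - 1)
      = ∑ i, localEdiff dA ρ (A i) * localEdiff dB σ (B i) := by
  rw [Ediff, trace_kronecker_mul_two_smul_sum_sub_one (trace_sub_inv_natCast_smul_one hdA hρtr)]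
  simp only [localEdiff, Complex.re_sum, Complex.mul_re, Complex.re_ofNat, Complex.im_ofNat,
    (hρ.sub_inv_natCast_smul_one dA).im_trace_mul_eq_zero (hA _), zero_mul, sub_zero,
    Finset.mul_sum]
  refine Finset.sum_congr rfl fun i _ => ?_
  ring

theorem dual_bell_chsh_general
    (dA dB : ℕ) (hdA : 2 ≤ dA) (hdB : 2 ≤ dB)
    (M₁ : Matrix (Fin dA × Fin dB) (Fin dA × Fin dB) ℂ)
    (hsep : SepPos M₁) (htr : M₁.trace ≤ 1)
    (ρA₀ ρA₁ : Matrix (Fin dA) (Fin dA) ℂ) (ρB₀ ρB₁ : Matrix (Fin dB) (Fin dB) ℂ)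
    (hA₀ : IsState ρA₀) (hA₁ : IsState ρA₁) (hB₀ : IsState ρB₀) (hB₁ : IsState ρB₁) :
    -2 ≤ Ediff dA dB ρA₀ ρB₀ ((2 : ℂ) • M₁ - 1) + Ediff dA dB ρA₀ ρB₁ ((2 : ℂ) • M₁ - 1)
        + Ediff dA dB ρA₁ ρB₀ ((2 : ℂ) • M₁ - 1) - Ediff dA dB ρA₁ ρB₁ ((2 : ℂ) • M₁ - 1) ∧
      Ediff dA dB ρA₀ ρB₀ ((2 : ℂ) • M₁ - 1) + Ediff dA dB ρA₀ ρB₁ ((2 : ℂ) • M₁ - 1)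
        + Ediff dA dB ρA₁ ρB₀ ((2 : ℂ) • M₁ - 1) - Ediff dA dB ρA₁ ρB₁ ((2 : ℂ) • M₁ - 1) ≤ 2 := by
  obtain ⟨n, A, B, hA, hB, rfl⟩ := hsep
  have hE : ∀ {ρ : Matrix (Fin dA) (Fin dA) ℂ} (σ : Matrix (Fin dB) (Fin dB) ℂ), IsState ρ →
      Ediff dA dB ρ σ ((2 : ℂ) • ∑ i, A i ⊗ₖ B i - 1)
        = ∑ i, localEdiff dA ρ (A i) * localEdiff dB σ (B i) := fun σ hρ =>
    Ediff_two_smul_sum_kronecker_sub_one (by omega) σ hρ.1.isHermitian hρ.2 B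
      fun i => (hA i).isHermitian
  rw [hE ρB₀ hA₀, hE ρB₁ hA₀, hE ρB₀ hA₁, hE ρB₁ hA₁, ← abs_le, ← Finset.sum_add_distrib,
    ← Finset.sum_add_distrib, ← Finset.sum_sub_distrib]
  calc _ ≤ ∑ i, 2 * ((A i).trace.re * (B i).trace.re) :=
        (Finset.abs_sum_le_sum_abs _ _).trans <| Finset.sum_le_sum fun i _ =>
          abs_chsh_le (abs_localEdiff_le hdA hA₀.1 hA₀.2 (hA i))
            (abs_localEdiff_le hdA hA₁.1 hA₁.2 (hA i))
            (abs_localEdiff_le hdB hB₀.1 hB₀.2 (hB i)) (abs_localEdiff_le hdB hB₁.1 hB₁.2 (hB i))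
    _ = 2 * (∑ i, A i ⊗ₖ B i).trace.re := by
        rw [re_trace_sum_kronecker B fun i => (hA i).isHermitian, Finset.mul_sum]
    _ ≤ 2 := by linarith [(Complex.le_def.mp htr).1, Complex.one_re]

/-- Dual Bell–CHSH inequality: a separable positive effect `M₁` with
`tr M₁ ≤ 1` satisfies `-2 ≤ D ≤ 2` for all quantum states. -/
theorem dual_bell_chsh
    (dA dB : ℕ) (hdA : 2 ≤ dA) (hdB : 2 ≤ dB)
    (M₁ : Matrix (Fin dA × Fin dB) (Fin dA × Fin dB) ℂ)
    (hM₁ : M₁.PosSemidef)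
    (hM₁' : ((1 : Matrix (Fin dA × Fin dB) (Fin dA × Fin dB) ℂ) - M₁).PosSemidef)
    (hsep : SepPos M₁) (htr : M₁.trace ≤ 1)
    (ρA₀ ρA₁ : Matrix (Fin dA) (Fin dA) ℂ) (ρB₀ ρB₁ : Matrix (Fin dB) (Fin dB) ℂ)
    (hA₀ : IsState ρA₀) (hA₁ : IsState ρA₁) (hB₀ : IsState ρB₀) (hB₁ : IsState ρB₁) :
    -2 ≤ Ediff dA dB ρA₀ ρB₀ ((2 : ℂ) • M₁ - 1) + Ediff dA dB ρA₀ ρB₁ ((2 : ℂ) • M₁ - 1)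
        + Ediff dA dB ρA₁ ρB₀ ((2 : ℂ) • M₁ - 1) - Ediff dA dB ρA₁ ρB₁ ((2 : ℂ) • M₁ - 1) ∧
      Ediff dA dB ρA₀ ρB₀ ((2 : ℂ) • M₁ - 1) + Ediff dA dB ρA₀ ρB₁ ((2 : ℂ) • M₁ - 1)
        + Ediff dA dB ρA₁ ρB₀ ((2 : ℂ) • M₁ - 1) - Ediff dA dB ρA₁ ρB₁ ((2 : ℂ) • M₁ - 1) ≤ 2 :=
  dual_bell_chsh_general dA dB hdA hdB M₁ hsep htr ρA₀ ρA₁ ρB₀ ρB₁ hA₀ hA₁ hB₀ hB₁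
end

section
/- Let T be a real 3×3 matrix. Then the supremum over vectors a₀, a₁, b₀, b₁ ∈ ℝ³ with Euclidean norm at most 1 of the quantity ⟨a₀, T(b₀ + b₁)⟩ + ⟨a₁, T(b₀ − b₁)⟩ equals 2√(λ₁(TᵀT) + λ₂(TᵀT)), where λ₁(A) ≥ λ₂(A) denote the two largest eigenvalues of the symmetric matrix A, and this supremum is attained. -/
/-!
Write `σ₀ ≥ σ₁ ≥ …` for the singular values of `T`, so that `σ₀² + σ₁² = λ₁(TᵀT) + λ₂(TᵀT)`.
The supremum over `a₀, a₁` of `⟨a₀, T(b₀+b₁)⟩ + ⟨a₁, T(b₀-b₁)⟩` is `‖T(b₀+b₁)‖ + ‖T(b₀-b₁)‖`,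
and the expression is linear in `b₀` and in `b₁` (through `Tᵀ`), so the `bᵢ` may be taken to be
unit vectors. Then `p = b₀ + b₁` and `q = b₀ - b₁` are orthogonal with `‖p‖² + ‖q‖² = 4`, and
Cauchy–Schwarz gives `‖Tp‖ + ‖Tq‖ ≤ 2 √(‖T p̂‖² + ‖T q̂‖²)`, which Ky Fan's maximum principle
bounds by `2 √(σ₀² + σ₁²)`. Equality holds when `b₀ ± b₁` point along the top two right singular
vectors, with lengths in the ratio `σ₀ : σ₁`.
-/

open Matrix

/-- The `k`-th largest eigenvalue of a symmetric real `3 × 3` matrix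
(`k = 0` giving the largest). -/
noncomputable def eigDesc {A : Matrix (Fin 3) (Fin 3) ℝ} (hA : A.IsHermitian)
    (k : Fin 3) : ℝ :=
  (hA.eigenvalues ∘ ⇑(Tuple.sort hA.eigenvalues)) k.rev

open Module InnerProductSpace

theorem sum_mul_le_sum_of_sum_eq_card {ι : Type*} [Fintype ι] (s : Finset ι) {f w : ι → ℝ}
    (c : ℝ) (hs : ∀ i ∈ s, c ≤ f i) (hsc : ∀ i ∉ s, f i ≤ c) (hw₀ : ∀ i, 0 ≤ w i)
    (hw₁ : ∀ i, w i ≤ 1) (hw : ∑ i, w i = s.card) :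
    ∑ i, f i * w i ≤ ∑ i ∈ s, f i := by
  classical
  have hexpand : ∑ i, (f i - c) * (w i - if i ∈ s then 1 else 0) =
      ∑ i, f i * w i - ∑ i ∈ s, f i - c * (∑ i, w i - s.card) := by
    simp only [mul_sub, sub_mul, Finset.sum_sub_distrib, mul_ite, mul_one, mul_zero,
      Finset.sum_ite_mem, Finset.univ_inter, ← Finset.mul_sum, Finset.sum_const, nsmul_eq_mul]
    ring
  -- Every term is `≤ 0`: `c` separates the values of `f` on `s` from those off `s`.
  have key : ∑ i, (f i - c) * (w i - if i ∈ s then 1 else 0) ≤ 0 := by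
    refine Finset.sum_nonpos fun i _ => ?_
    by_cases hi : i ∈ s
    · simp only [hi, if_true]; nlinarith [hs i hi, hw₁ i]
    · simp only [hi, if_false]; nlinarith [hsc i hi, hw₀ i]
  rw [hexpand, hw, sub_self, mul_zero, sub_zero] at key
  linarith

namespace LinearMap

variable {𝕜 E F : Type*} [RCLike 𝕜]
  [NormedAddCommGroup E] [InnerProductSpace 𝕜 E] [FiniteDimensional 𝕜 E]
  [NormedAddCommGroup F] [InnerProductSpace 𝕜 F] [FiniteDimensional 𝕜 F]
  (T : E →ₗ[𝕜] F)

noncomputable def rightSingularBasis : OrthonormalBasis (Fin (finrank 𝕜 E)) 𝕜 E :=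
  T.isSymmetric_adjoint_comp_self.eigenvectorBasis rfl

theorem adjoint_apply_apply_rightSingularBasis (i : Fin (finrank 𝕜 E)) :
    adjoint T (T (T.rightSingularBasis i)) =
      ((T.singularValues i ^ 2 : ℝ) : 𝕜) • T.rightSingularBasis i := by
  rw [T.sq_singularValues_fin rfl]
  exact T.isSymmetric_adjoint_comp_self.apply_eigenvectorBasis rfl i

theorem inner_apply_rightSingularBasis_apply (i : Fin (finrank 𝕜 E)) (x : E) :
    ⟪T (T.rightSingularBasis i), T x⟫_𝕜 =
      ((T.singularValues i ^ 2 : ℝ) : 𝕜) * ⟪T.rightSingularBasis i, x⟫_𝕜 := by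
  rw [← adjoint_inner_left, adjoint_apply_apply_rightSingularBasis, inner_smul_left,
    RCLike.conj_ofReal]

theorem norm_apply_rightSingularBasis (i : Fin (finrank 𝕜 E)) :
    ‖T (T.rightSingularBasis i)‖ = T.singularValues i := by
  have h := T.inner_apply_rightSingularBasis_apply i (T.rightSingularBasis i)
  rw [inner_self_eq_norm_sq_to_K, inner_self_eq_norm_sq_to_K,
    T.rightSingularBasis.orthonormal.1 i] at h
  norm_cast at h
  simp only [one_pow, Nat.cast_one, mul_one] at h
  exact (sq_eq_sq₀ (norm_nonneg _) (T.singularValues_nonneg _)).1 h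

theorem sq_norm_apply_eq_sum (x : E) :
    ‖T x‖ ^ 2 = ∑ i : Fin (finrank 𝕜 E),
      T.singularValues i ^ 2 * ‖⟪T.rightSingularBasis i, x⟫_𝕜‖ ^ 2 := by
  rw [@norm_sq_eq_re_inner 𝕜, ← adjoint_inner_right, ← T.rightSingularBasis.sum_inner_mul_inner,
    map_sum]
  refine Finset.sum_congr rfl fun i _ => ?_
  rw [adjoint_inner_right, inner_apply_rightSingularBasis_apply, mul_left_comm,
    RCLike.re_ofReal_mul, inner_mul_symm_re_eq_norm, norm_mul, norm_inner_symm]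
  ring

theorem sq_singularValues_le_of_le {i j : ℕ} (h : i ≤ j) :
    T.singularValues j ^ 2 ≤ T.singularValues i ^ 2 :=
  pow_le_pow_left₀ (T.singularValues_nonneg j) (T.singularValues_antitone h) 2

/-- Ky Fan's maximum principle. -/
theorem sum_sq_norm_apply_le_sum_sq_singularValues {ι : Type*} [Fintype ι] {v : ι → E}
    (hv : Orthonormal 𝕜 v) :
    ∑ j, ‖T (v j)‖ ^ 2 ≤ ∑ i ∈ Finset.range (Fintype.card ι), T.singularValues i ^ 2 := by
  set b := T.rightSingularBasis
  set k := Fintype.card ι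
  -- Bessel bounds each weight by `1`, Parseval makes them sum to `k`.
  set w : Fin (finrank 𝕜 E) → ℝ := fun i => ∑ j, ‖⟪v j, b i⟫_𝕜‖ ^ 2
  set s : Finset (Fin (finrank 𝕜 E)) := {i | (i : ℕ) < k}
  have hs : s.map Fin.valEmbedding = Finset.range k := by
    ext m
    have := hv.linearIndependent.fintype_card_le_finrank
    simp only [Finset.mem_map, Finset.mem_filter, Finset.mem_univ, true_and,
      Fin.valEmbedding_apply, Finset.mem_range, s]
    exact ⟨fun ⟨i, hi, hm⟩ => hm ▸ hi, fun hm => ⟨⟨m, by omega⟩, hm, rfl⟩⟩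
  have hw : ∑ i, w i = s.card := by
    rw [← Finset.card_map, hs, Finset.card_range, Finset.sum_comm]
    simp [b.sum_sq_norm_inner_left, hv.1, k]
  have hlhs : ∑ j, ‖T (v j)‖ ^ 2 = ∑ i : Fin (finrank 𝕜 E), T.singularValues i ^ 2 * w i := by
    simp only [sq_norm_apply_eq_sum, Finset.mul_sum, w, norm_inner_symm]
    exact Finset.sum_comm
  rw [hlhs, ← hs, Finset.sum_map]
  refine sum_mul_le_sum_of_sum_eq_card s (T.singularValues k ^ 2) (fun i hi => ?_)
    (fun i hi => ?_) (fun i => by positivity) (fun i => ?_) hw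
  · exact T.sq_singularValues_le_of_le (Finset.mem_filter.1 hi).2.le
  · exact T.sq_singularValues_le_of_le (not_lt.1 fun h => hi (by simpa [s] using h))
  · simpa [b.orthonormal.1 i] using hv.sum_inner_products_le (b i) (s := Finset.univ)

theorem norm_apply_le_singularValues_zero_mul (x : E) : ‖T x‖ ≤ T.singularValues 0 * ‖x‖ := by
  have h : ‖T x‖ ^ 2 ≤ (T.singularValues 0 * ‖x‖) ^ 2 := by
    rw [mul_pow, sq_norm_apply_eq_sum, ← T.rightSingularBasis.sum_sq_norm_inner_right x,
      Finset.mul_sum]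
    exact Finset.sum_le_sum fun i _ =>
      mul_le_mul_of_nonneg_right (T.sq_singularValues_le_of_le (Nat.zero_le i)) (by positivity)
  exact (pow_le_pow_iff_left₀ (norm_nonneg _)
    (mul_nonneg (T.singularValues_nonneg 0) (norm_nonneg x)) two_ne_zero).1 h

theorem norm_apply_add_norm_apply_le_of_inner_eq_zero {p q : E} (hpq : ⟪p, q⟫_𝕜 = 0) :
    ‖T p‖ + ‖T q‖ ≤
      √(‖p‖ ^ 2 + ‖q‖ ^ 2) * √(T.singularValues 0 ^ 2 + T.singularValues 1 ^ 2) := by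
  have hσ₀ : T.singularValues 0 ≤ √(T.singularValues 0 ^ 2 + T.singularValues 1 ^ 2) :=
    Real.le_sqrt_of_sq_le (le_add_of_nonneg_right (sq_nonneg _))
  rcases eq_or_ne p 0 with rfl | hp
  · simpa [Real.sqrt_sq (norm_nonneg q), mul_comm] using
      (T.norm_apply_le_singularValues_zero_mul q).trans
        (mul_le_mul_of_nonneg_right hσ₀ (norm_nonneg q))
  rcases eq_or_ne q 0 with rfl | hq
  · simpa [Real.sqrt_sq (norm_nonneg p), mul_comm] using
      (T.norm_apply_le_singularValues_zero_mul p).trans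
        (mul_le_mul_of_nonneg_right hσ₀ (norm_nonneg p))
  set e : Fin 2 → E := ![(‖p‖⁻¹ : 𝕜) • p, (‖q‖⁻¹ : 𝕜) • q]
  have he : Orthonormal 𝕜 e := by
    rw [orthonormal_iff_ite]
    intro i j
    fin_cases i <;> fin_cases j <;>
      simp [e, inner_smul_left, inner_smul_right, hpq, inner_eq_zero_symm.1 hpq,
        norm_smul_inv_norm, hp, hq]
  have hKyFan : ‖T (e 0)‖ ^ 2 + ‖T (e 1)‖ ^ 2 ≤
      T.singularValues 0 ^ 2 + T.singularValues 1 ^ 2 := by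
    simpa [Fin.sum_univ_two, Finset.sum_range_succ] using
      T.sum_sq_norm_apply_le_sum_sq_singularValues he
  have hp' : ‖T p‖ = ‖p‖ * ‖T (e 0)‖ := by simp [e, norm_smul, hp]
  have hq' : ‖T q‖ = ‖q‖ * ‖T (e 1)‖ := by simp [e, norm_smul, hq]
  calc ‖T p‖ + ‖T q‖ = ‖p‖ * ‖T (e 0)‖ + ‖q‖ * ‖T (e 1)‖ := by rw [hp', hq']
    _ ≤ √(‖p‖ ^ 2 + ‖q‖ ^ 2) * √(‖T (e 0)‖ ^ 2 + ‖T (e 1)‖ ^ 2) := by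
      simpa [Fin.sum_univ_two] using
        Real.sum_mul_le_sqrt_mul_sqrt Finset.univ ![‖p‖, ‖q‖] ![‖T (e 0)‖, ‖T (e 1)‖]
    _ ≤ _ := mul_le_mul_of_nonneg_left (Real.sqrt_le_sqrt hKyFan) (Real.sqrt_nonneg _)

end LinearMap

theorem exists_norm_le_one_real_inner_eq_norm {F : Type*} [NormedAddCommGroup F]
    [InnerProductSpace ℝ F] (y : F) : ∃ a : F, ‖a‖ ≤ 1 ∧ ⟪a, y⟫_ℝ = ‖y‖ := by
  refine ⟨‖y‖⁻¹ • y, ?_, ?_⟩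
  · rw [norm_smul, norm_inv, norm_norm]
    exact inv_mul_le_one_of_le₀ le_rfl (norm_nonneg y)
  · rw [real_inner_smul_left, real_inner_self_eq_norm_sq, sq, ← mul_assoc, inv_mul_mul_self]

theorem exists_norm_eq_one_real_inner_le {E : Type*} [NormedAddCommGroup E]
    [InnerProductSpace ℝ E] [Nontrivial E] (u : E) {b : E} (hb : ‖b‖ ≤ 1) :
    ∃ c : E, ‖c‖ = 1 ∧ ⟪u, b⟫_ℝ ≤ ⟪u, c⟫_ℝ := by
  rcases eq_or_ne u 0 with rfl | hu
  · obtain ⟨c, hc⟩ := (NormedSpace.sphere_nonempty (x := (0 : E))).2 zero_le_one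
    exact ⟨c, mem_sphere_zero_iff_norm.1 hc, by simp⟩
  · refine ⟨‖u‖⁻¹ • u, norm_smul_inv_norm hu, ?_⟩
    rw [real_inner_smul_right, real_inner_self_eq_norm_sq]
    calc ⟪u, b⟫_ℝ ≤ ‖u‖ * ‖b‖ := real_inner_le_norm u b
      _ ≤ ‖u‖ := mul_le_of_le_one_right (norm_nonneg u) hb
      _ = ‖u‖⁻¹ * ‖u‖ ^ 2 := by field_simp

namespace LinearMap

variable {E F : Type*} [NormedAddCommGroup E] [InnerProductSpace ℝ E]
  [NormedAddCommGroup F] [InnerProductSpace ℝ F] (T : E →ₗ[ℝ] F)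

def chsh (a₀ a₁ : F) (b₀ b₁ : E) : ℝ := ⟪a₀, T (b₀ + b₁)⟫_ℝ + ⟪a₁, T (b₀ - b₁)⟫_ℝ

def chshValues : Set ℝ :=
  {x | ∃ (a₀ a₁ : F) (b₀ b₁ : E), ‖a₀‖ ≤ 1 ∧ ‖a₁‖ ≤ 1 ∧ ‖b₀‖ ≤ 1 ∧ ‖b₁‖ ≤ 1 ∧
    x = T.chsh a₀ a₁ b₀ b₁}

theorem chsh_le_norm_add_norm {a₀ a₁ : F} (ha₀ : ‖a₀‖ ≤ 1) (ha₁ : ‖a₁‖ ≤ 1) (b₀ b₁ : E) :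
    T.chsh a₀ a₁ b₀ b₁ ≤ ‖T (b₀ + b₁)‖ + ‖T (b₀ - b₁)‖ := by
  have h : ∀ {a : F} (y : F), ‖a‖ ≤ 1 → ⟪a, y⟫_ℝ ≤ ‖y‖ := fun y ha =>
    (real_inner_le_norm _ y).trans (mul_le_of_le_one_left (norm_nonneg y) ha)
  exact add_le_add (h _ ha₀) (h _ ha₁)

theorem exists_chsh_eq_norm_add_norm (b₀ b₁ : E) : ∃ a₀ a₁ : F, ‖a₀‖ ≤ 1 ∧ ‖a₁‖ ≤ 1 ∧
    T.chsh a₀ a₁ b₀ b₁ = ‖T (b₀ + b₁)‖ + ‖T (b₀ - b₁)‖ := by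
  obtain ⟨a₀, ha₀, h₀⟩ := exists_norm_le_one_real_inner_eq_norm (T (b₀ + b₁))
  obtain ⟨a₁, ha₁, h₁⟩ := exists_norm_le_one_real_inner_eq_norm (T (b₀ - b₁))
  exact ⟨a₀, a₁, ha₀, ha₁, by rw [chsh, h₀, h₁]⟩

variable [FiniteDimensional ℝ E] [FiniteDimensional ℝ F]

theorem chsh_eq_inner_adjoint (a₀ a₁ : F) (b₀ b₁ : E) :
    T.chsh a₀ a₁ b₀ b₁ = ⟪adjoint T (a₀ + a₁), b₀⟫_ℝ + ⟪adjoint T (a₀ - a₁), b₁⟫_ℝ := by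
  simp only [chsh, adjoint_inner_left, map_add, map_sub, inner_add_left, inner_sub_left,
    inner_add_right, inner_sub_right]
  ring

theorem norm_apply_add_add_norm_apply_sub_le {c₀ c₁ : E} (hc₀ : ‖c₀‖ = 1) (hc₁ : ‖c₁‖ = 1) :
    ‖T (c₀ + c₁)‖ + ‖T (c₀ - c₁)‖ ≤ 2 * √(T.singularValues 0 ^ 2 + T.singularValues 1 ^ 2) := by
  have h4 : ‖c₀ + c₁‖ ^ 2 + ‖c₀ - c₁‖ ^ 2 = 2 ^ 2 := by
    rw [parallelogram_law_with_norm ℝ, hc₀, hc₁]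
    norm_num
  simpa [h4] using T.norm_apply_add_norm_apply_le_of_inner_eq_zero
    ((real_inner_add_sub_eq_zero_iff c₀ c₁).2 (hc₀.trans hc₁.symm))

theorem chsh_le [Nontrivial E] {a₀ a₁ : F} {b₀ b₁ : E} (ha₀ : ‖a₀‖ ≤ 1) (ha₁ : ‖a₁‖ ≤ 1)
    (hb₀ : ‖b₀‖ ≤ 1) (hb₁ : ‖b₁‖ ≤ 1) :
    T.chsh a₀ a₁ b₀ b₁ ≤ 2 * √(T.singularValues 0 ^ 2 + T.singularValues 1 ^ 2) := by
  obtain ⟨c₀, hc₀, h₀⟩ := exists_norm_eq_one_real_inner_le (adjoint T (a₀ + a₁)) hb₀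
  obtain ⟨c₁, hc₁, h₁⟩ := exists_norm_eq_one_real_inner_le (adjoint T (a₀ - a₁)) hb₁
  calc T.chsh a₀ a₁ b₀ b₁ ≤ T.chsh a₀ a₁ c₀ c₁ := by
        rw [chsh_eq_inner_adjoint, chsh_eq_inner_adjoint]
        exact add_le_add h₀ h₁
    _ ≤ ‖T (c₀ + c₁)‖ + ‖T (c₀ - c₁)‖ := T.chsh_le_norm_add_norm ha₀ ha₁ c₀ c₁
    _ ≤ _ := T.norm_apply_add_add_norm_apply_sub_le hc₀ hc₁

theorem exists_norm_apply_add_add_norm_apply_sub_eq (hE : 2 ≤ finrank ℝ E) :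
    ∃ b₀ b₁ : E, ‖b₀‖ ≤ 1 ∧ ‖b₁‖ ≤ 1 ∧
      ‖T (b₀ + b₁)‖ + ‖T (b₀ - b₁)‖ = 2 * √(T.singularValues 0 ^ 2 + T.singularValues 1 ^ 2) := by
  set e₀ := T.rightSingularBasis ⟨0, by omega⟩
  set e₁ := T.rightSingularBasis ⟨1, by omega⟩
  set σ₀ := T.singularValues 0
  set σ₁ := T.singularValues 1
  set s := √(σ₀ ^ 2 + σ₁ ^ 2)
  have hσ₀ : 0 ≤ σ₀ := T.singularValues_nonneg 0
  have hσ₁ : 0 ≤ σ₁ := T.singularValues_nonneg 1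
  have hx : ∀ t : ℝ, ‖σ₀ • e₀ + t • e₁‖ = √(σ₀ ^ 2 + t ^ 2) := by
    intro t
    have he₀₁ : ⟪e₀, e₁⟫_ℝ = 0 := T.rightSingularBasis.orthonormal.2 (by simp [Fin.ext_iff])
    rw [← Real.sqrt_sq (norm_nonneg _), norm_add_sq_real, real_inner_smul_left,
      real_inner_smul_right, he₀₁, norm_smul, norm_smul, T.rightSingularBasis.orthonormal.1,
      T.rightSingularBasis.orthonormal.1]
    simp [sq_abs]
  have hb : ∀ t : ℝ, t ^ 2 = σ₁ ^ 2 → ‖s⁻¹ • (σ₀ • e₀ + t • e₁)‖ ≤ 1 := fun t ht => by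
    rw [norm_smul, hx, ht, norm_inv, Real.norm_of_nonneg (Real.sqrt_nonneg _)]
    exact inv_mul_le_one_of_le₀ le_rfl (Real.sqrt_nonneg _)
  refine ⟨s⁻¹ • (σ₀ • e₀ + σ₁ • e₁), s⁻¹ • (σ₀ • e₀ + (-σ₁) • e₁), hb _ rfl, hb _ (neg_sq _), ?_⟩
  rw [show s⁻¹ • (σ₀ • e₀ + σ₁ • e₁) + s⁻¹ • (σ₀ • e₀ + (-σ₁) • e₁) = (2 * s⁻¹ * σ₀) • e₀ by
      module,
    show s⁻¹ • (σ₀ • e₀ + σ₁ • e₁) - s⁻¹ • (σ₀ • e₀ + (-σ₁) • e₁) = (2 * s⁻¹ * σ₁) • e₁ by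
      module,
    map_smul, map_smul, norm_smul, norm_smul, T.norm_apply_rightSingularBasis,
    T.norm_apply_rightSingularBasis, Real.norm_of_nonneg (by positivity),
    Real.norm_of_nonneg (by positivity)]
  have hs : s * s = σ₀ ^ 2 + σ₁ ^ 2 := Real.mul_self_sqrt (by positivity)
  calc 2 * s⁻¹ * σ₀ * σ₀ + 2 * s⁻¹ * σ₁ * σ₁ = 2 * ((σ₀ ^ 2 + σ₁ ^ 2) / s) := by ring
    _ = 2 * s := by rw [← hs, mul_self_div_self]

theorem isGreatest_chshValues (hE : 2 ≤ finrank ℝ E) :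
    IsGreatest T.chshValues (2 * √(T.singularValues 0 ^ 2 + T.singularValues 1 ^ 2)) := by
  have : Nontrivial E := Module.nontrivial_of_finrank_pos (R := ℝ) (by omega)
  refine ⟨?_, ?_⟩
  · obtain ⟨b₀, b₁, hb₀, hb₁, hb⟩ := T.exists_norm_apply_add_add_norm_apply_sub_eq hE
    obtain ⟨a₀, a₁, ha₀, ha₁, ha⟩ := T.exists_chsh_eq_norm_add_norm b₀ b₁
    exact ⟨a₀, a₁, b₀, b₁, ha₀, ha₁, hb₀, hb₁, (ha.trans hb).symm⟩
  · rintro x ⟨a₀, a₁, b₀, b₁, ha₀, ha₁, hb₀, hb₁, rfl⟩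
    exact T.chsh_le ha₀ ha₁ hb₀ hb₁

end LinearMap

theorem Tuple.comp_sort_comp_rev_of_antitone {α : Type*} [LinearOrder α] {m : ℕ}
    {g : Fin m → α} (hg : Antitone g) (π : Equiv.Perm (Fin m)) :
    (g ∘ π) ∘ Tuple.sort (g ∘ π) ∘ Fin.rev = g := by
  have hsorted : Antitone (g ∘ ⇑(π * Tuple.sort (g ∘ π) * Fin.revPerm : Equiv.Perm (Fin m))) :=
    (Tuple.monotone_sort (g ∘ π)).comp_antitone Fin.rev_anti
  exact Tuple.unique_antitone (τ := 1) hsorted hg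

/-- `IsHermitian.eigenvalues` is indexed through an arbitrary `n ≃ Fin (card n)`, so it only
matches the (sorted) singular values up to this reindexing. -/
theorem Matrix.exists_eigenvalues_conjTranspose_mul_self_eq {𝕜 m n : Type*} [RCLike 𝕜]
    [Fintype m] [Fintype n] [DecidableEq n] (T : Matrix m n 𝕜) :
    ∃ π : n ≃ Fin (Fintype.card n), ∀ i, (isHermitian_conjTranspose_mul_self T).eigenvalues i =
      (toEuclideanLin T).singularValues (π i) ^ 2 := by
  classical
  refine ⟨(Fintype.equivOfCardEq (Fintype.card_fin _)).symm, fun i => ?_⟩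
  rw [(toEuclideanLin T).sq_singularValues_fin (finrank_euclideanSpace (𝕜 := 𝕜) (ι := n))]
  show (isSymmetric_toEuclideanLin_iff.mpr (isHermitian_conjTranspose_mul_self T)).eigenvalues
    finrank_euclideanSpace _ = _
  congr 1
  rw [toLpLin_mul_same, toEuclideanLin_conjTranspose_eq_adjoint]

theorem eigDesc_conjTranspose_mul_self (T : Matrix (Fin 3) (Fin 3) ℝ) (k : Fin 3) :
    eigDesc (isHermitian_conjTranspose_mul_self T) k = (toEuclideanLin T).singularValues k ^ 2 := by
  obtain ⟨π, hπ⟩ := T.exists_eigenvalues_conjTranspose_mul_self_eq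
  set g : Fin 3 → ℝ := fun j => (toEuclideanLin T).singularValues j ^ 2
  have hg : Antitone g := fun i j hij => (toEuclideanLin T).sq_singularValues_le_of_le hij
  have hμ : (isHermitian_conjTranspose_mul_self T).eigenvalues =
      g ∘ (π.trans (finCongr (Fintype.card_fin 3))) := funext hπ
  rw [eigDesc, hμ]
  exact congrFun (Tuple.comp_sort_comp_rev_of_antitone hg _) k

theorem EuclideanSpace.norm_toLp_le_one_iff {n : Type*} [Fintype n] (a : n → ℝ) :
    ‖(WithLp.toLp 2 a : EuclideanSpace ℝ n)‖ ≤ 1 ↔ a ⬝ᵥ a ≤ 1 := by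
  rw [← sq_le_one_iff₀ (norm_nonneg _), ← real_inner_self_eq_norm_sq,
    EuclideanSpace.inner_toLp_toLp, star_trivial]

theorem Matrix.chsh_toEuclideanLin {m n : Type*} [Fintype m] [Fintype n] [DecidableEq n]
    (T : Matrix m n ℝ) (a₀ a₁ : m → ℝ) (b₀ b₁ : n → ℝ) :
    (toEuclideanLin T).chsh (WithLp.toLp 2 a₀) (WithLp.toLp 2 a₁) (WithLp.toLp 2 b₀)
      (WithLp.toLp 2 b₁) = a₀ ⬝ᵥ T *ᵥ (b₀ + b₁) + a₁ ⬝ᵥ T *ᵥ (b₀ - b₁) := by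
  simp only [LinearMap.chsh, ← WithLp.toLp_add, ← WithLp.toLp_sub, toLpLin_toLp,
    EuclideanSpace.inner_toLp_toLp, star_trivial, Matrix.toLin'_apply, dotProduct_comm]

theorem Matrix.chshValues_toEuclideanLin {m n : Type*} [Fintype m] [Fintype n] [DecidableEq n]
    (T : Matrix m n ℝ) :
    (toEuclideanLin T).chshValues = {x | ∃ (a₀ a₁ : m → ℝ) (b₀ b₁ : n → ℝ),
      a₀ ⬝ᵥ a₀ ≤ 1 ∧ a₁ ⬝ᵥ a₁ ≤ 1 ∧ b₀ ⬝ᵥ b₀ ≤ 1 ∧ b₁ ⬝ᵥ b₁ ≤ 1 ∧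
        x = a₀ ⬝ᵥ T *ᵥ (b₀ + b₁) + a₁ ⬝ᵥ T *ᵥ (b₀ - b₁)} := by
  ext x
  constructor
  · rintro ⟨⟨a₀⟩, ⟨a₁⟩, ⟨b₀⟩, ⟨b₁⟩, h⟩
    simp only [EuclideanSpace.norm_toLp_le_one_iff, chsh_toEuclideanLin] at h
    exact ⟨a₀, a₁, b₀, b₁, h⟩
  · rintro ⟨a₀, a₁, b₀, b₁, h⟩
    refine ⟨WithLp.toLp 2 a₀, WithLp.toLp 2 a₁, WithLp.toLp 2 b₀, WithLp.toLp 2 b₁, ?_⟩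
    simpa only [EuclideanSpace.norm_toLp_le_one_iff, chsh_toEuclideanLin] using h

/-- the maximum of `⟨a₀, T(b₀+b₁)⟩ + ⟨a₁, T(b₀-b₁)⟩` over unit-ball
vectors `a₀, a₁, b₀, b₁ ∈ ℝ³` equals `2 √(λ₁(TᵀT) + λ₂(TᵀT))`, and it is attained. -/
theorem bloch_chsh_sup
    (T : Matrix (Fin 3) (Fin 3) ℝ) :
    IsGreatest
      {x : ℝ | ∃ a₀ a₁ b₀ b₁ : Fin 3 → ℝ,
        a₀ ⬝ᵥ a₀ ≤ 1 ∧ a₁ ⬝ᵥ a₁ ≤ 1 ∧ b₀ ⬝ᵥ b₀ ≤ 1 ∧ b₁ ⬝ᵥ b₁ ≤ 1 ∧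
        x = a₀ ⬝ᵥ T.mulVec (b₀ + b₁) + a₁ ⬝ᵥ T.mulVec (b₀ - b₁)}
      (2 * Real.sqrt (eigDesc (Matrix.isHermitian_conjTranspose_mul_self T) 0
        + eigDesc (Matrix.isHermitian_conjTranspose_mul_self T) 1)) := by
  rw [eigDesc_conjTranspose_mul_self, eigDesc_conjTranspose_mul_self,
    ← chshValues_toEuclideanLin]
  exact (toEuclideanLin T).isGreatest_chshValues (by simp)
end
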